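/- arXiv:1608.06159 — 10 statements merged into one kernel-verified Lean document; each statement's English description precedes it below -/
import Mathlib

section
/- Let f : ℝ^M → ℝ be differentiable with gradient ∇f that is K-Lipschitz (‖∇f(x) − ∇f(y)‖ ≤ K‖x − y‖ for all x, y). Let H be a symmetric M×M real matrix satisfying xᵀHx ≥ λ_min‖x‖² for all x. If c ≥ K − λ_min, then for all m, Δm ∈ ℝ^M the sufficient-decrease bound holds: f(m + Δm) − f(m) ≤ Δmᵀ∇f(m) + (1/2)Δmᵀ(H + cI)Δm. -/
open scoped RealInnerProductSpace

/- Descent lemma: along `s ↦ x + s • h` the derivative of `f` drifts from `f' x h` by at most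
`K s ‖h‖²`, so `s ↦ f (x + s • h) - s f' x h - K s² ‖h‖² / 2` is antitone on `[0, 1]`.
Adding `c I` to a matrix whose quadratic form is at least `λ ‖·‖²` makes the quadratic model's
curvature `λ + c ≥ K`, which dominates this bound. -/

theorem sub_le_fderiv_add_of_lipschitz_fderiv {E : Type*} [NormedAddCommGroup E]
    [NormedSpace ℝ E] {f : E → ℝ} {f' : E → E →L[ℝ] ℝ} {K : ℝ}
    (hf : ∀ x, HasFDerivAt f (f' x) x) (hK : ∀ x y, ‖f' x - f' y‖ ≤ K * ‖x - y‖) (x h : E) :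
    f (x + h) - f x ≤ f' x h + K / 2 * ‖h‖ ^ 2 := by
  set φ : ℝ → ℝ := fun s => f (x + s • h) - s * f' x h - K / 2 * s ^ 2 * ‖h‖ ^ 2
  have hφ : ∀ s : ℝ, HasDerivAt φ (f' (x + s • h) h - f' x h - K * s * ‖h‖ ^ 2) s := by
    intro s
    have hline : HasDerivAt (fun t : ℝ => x + t • h) h s := by
      simpa using ((hasDerivAt_id s).smul_const h).const_add x
    have hquad := ((hasDerivAt_pow 2 s).const_mul (K / 2)).mul_const (‖h‖ ^ 2)
    refine ((((hf _).comp_hasDerivAt s hline).sub ((hasDerivAt_id s).mul_const (f' x h))).sub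
      hquad).congr_deriv ?_
    simp only [Nat.cast_ofNat, Nat.add_one_sub_one, pow_one, one_mul]
    ring
  have hdrift : ∀ s ∈ interior (Set.Icc (0 : ℝ) 1),
      f' (x + s • h) h - f' x h ≤ K * s * ‖h‖ ^ 2 := by
    intro s hs
    rw [interior_Icc] at hs
    calc f' (x + s • h) h - f' x h = (f' (x + s • h) - f' x) h := rfl
      _ ≤ ‖f' (x + s • h) - f' x‖ * ‖h‖ := (le_abs_self _).trans ((f' _ - f' x).le_opNorm h)
      _ ≤ K * ‖x + s • h - x‖ * ‖h‖ := by gcongr; exact hK _ _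
      _ = K * s * ‖h‖ ^ 2 := by
        rw [add_sub_cancel_left, norm_smul, Real.norm_of_nonneg hs.1.le]; ring
  have hanti : AntitoneOn φ (Set.Icc 0 1) :=
    antitoneOn_of_hasDerivWithinAt_nonpos (convex_Icc 0 1)
      (HasDerivAt.continuousOn fun s _ => hφ s) (fun s _ => (hφ s).hasDerivWithinAt)
      fun s hs => by linarith [hdrift s hs]
  have h10 : φ 1 ≤ φ 0 := hanti (by norm_num) (by norm_num) zero_le_one
  simp only [φ] at h10
  norm_num at h10
  linarith

theorem sub_le_inner_gradient_add_of_lipschitz_gradient {F : Type*} [NormedAddCommGroup F]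
    [InnerProductSpace ℝ F] [CompleteSpace F] {f : F → ℝ} {g : F → F} {K : ℝ}
    (hf : ∀ x, HasGradientAt f (g x) x) (hK : ∀ x y, ‖g x - g y‖ ≤ K * ‖x - y‖) (x h : F) :
    f (x + h) - f x ≤ ⟪g x, h⟫ + K / 2 * ‖h‖ ^ 2 :=
  sub_le_fderiv_add_of_lipschitz_fderiv (fun x => (hf x).hasFDerivAt)
    (fun x y => by rw [← map_sub, LinearIsometryEquiv.norm_map]; exact hK x y) x h

theorem Matrix.inner_toEuclideanLin_add_smul_one {n : Type*} [Fintype n] [DecidableEq n]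
    (A : Matrix n n ℝ) (c : ℝ) (v : EuclideanSpace ℝ n) :
    ⟪v, Matrix.toEuclideanLin (A + c • 1) v⟫ = ⟪v, Matrix.toEuclideanLin A v⟫ + c * ‖v‖ ^ 2 := by
  have hone : Matrix.toEuclideanLin (1 : Matrix n n ℝ) v = v := by simp
  rw [map_add, map_smul, LinearMap.add_apply, LinearMap.smul_apply, hone, inner_add_right,
    real_inner_smul_right, real_inner_self_eq_norm_sq]

theorem stmt_1_general {M : ℕ} (f : EuclideanSpace ℝ (Fin M) → ℝ)
    (g : EuclideanSpace ℝ (Fin M) → EuclideanSpace ℝ (Fin M))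
    (K lam c : ℝ)
    (hgrad : ∀ x, HasGradientAt f (g x) x)
    (hK : ∀ x y, ‖g x - g y‖ ≤ K * ‖x - y‖)
    (H : Matrix (Fin M) (Fin M) ℝ)
    (hlow : ∀ x : EuclideanSpace ℝ (Fin M), lam * ‖x‖ ^ 2 ≤ ⟪x, Matrix.toEuclideanLin H x⟫)
    (hc : K - lam ≤ c)
    (m Δm : EuclideanSpace ℝ (Fin M)) :
    f (m + Δm) - f m ≤
      ⟪Δm, g m⟫ +
        (1 / 2) * ⟪Δm, Matrix.toEuclideanLin (H + c • (1 : Matrix (Fin M) (Fin M) ℝ)) Δm⟫ := by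
  have hcurv : K * ‖Δm‖ ^ 2 ≤ ⟪Δm, Matrix.toEuclideanLin H Δm⟫ + c * ‖Δm‖ ^ 2 := by
    nlinarith [hlow Δm, sq_nonneg ‖Δm‖]
  rw [Matrix.inner_toEuclideanLin_add_smul_one, real_inner_comm]
  linarith [sub_le_inner_gradient_add_of_lipschitz_gradient hgrad hK m Δm]

/-- Sufficient-decrease bound: if `c ≥ K − λ_min`, then the quadratic model with Hessian
approximation `H + cI` majorizes the change in `f`. -/
theorem stmt_1 {M : ℕ} (f : EuclideanSpace ℝ (Fin M) → ℝ)
    (g : EuclideanSpace ℝ (Fin M) → EuclideanSpace ℝ (Fin M))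
    (K lam c : ℝ)
    (hgrad : ∀ x, HasGradientAt f (g x) x)
    (hK : ∀ x y, ‖g x - g y‖ ≤ K * ‖x - y‖)
    (H : Matrix (Fin M) (Fin M) ℝ) (hH : H.IsSymm)
    (hlow : ∀ x : EuclideanSpace ℝ (Fin M), lam * ‖x‖ ^ 2 ≤ ⟪x, Matrix.toEuclideanLin H x⟫)
    (hc : K - lam ≤ c)
    (m Δm : EuclideanSpace ℝ (Fin M)) :
    f (m + Δm) - f m ≤
      ⟪Δm, g m⟫ +
        (1 / 2) * ⟪Δm, Matrix.toEuclideanLin (H + c • (1 : Matrix (Fin M) (Fin M) ℝ)) Δm⟫ :=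
  stmt_1_general f g K lam c hgrad hK H hlow hc m Δm
end

section
/- Let f : ℝ^M → ℝ be differentiable, C ⊆ ℝ^M a convex set, m ∈ C, H a symmetric M×M real matrix and c ∈ ℝ such that H + cI is positive definite and the bound f(m + Δ) − f(m) ≤ Δᵀ∇f(m) + (1/2)Δᵀ(H + cI)Δ holds for every Δ with m + Δ ∈ C. If Δm minimizes the quadratic q(Δ) = Δᵀ∇f(m) + (1/2)Δᵀ(H + cI)Δ over {Δ : m + Δ ∈ C} and Δm ≠ 0, then strict descent holds: f(m + Δm) < f(m). -/
open scoped RealInnerProductSpace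

/-- Strict descent: if in addition `H + cI` is positive definite and the minimizer `Δm`
of the quadratic model over the feasible set is nonzero, then `f` strictly decreases. -/
theorem stmt_3 {M : ℕ} (f : EuclideanSpace ℝ (Fin M) → ℝ)
    (g : EuclideanSpace ℝ (Fin M) → EuclideanSpace ℝ (Fin M))
    (hgrad : ∀ x, HasGradientAt f (g x) x)
    (C : Set (EuclideanSpace ℝ (Fin M))) (hC : Convex ℝ C)
    (m : EuclideanSpace ℝ (Fin M)) (hm : m ∈ C)
    (H : Matrix (Fin M) (Fin M) ℝ) (hH : H.IsSymm) (c : ℝ)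
    (hpd : ∀ x : EuclideanSpace ℝ (Fin M), x ≠ 0 →
      0 < ⟪x, Matrix.toEuclideanLin (H + c • (1 : Matrix (Fin M) (Fin M) ℝ)) x⟫)
    (hbound : ∀ Δ : EuclideanSpace ℝ (Fin M), m + Δ ∈ C →
      f (m + Δ) - f m ≤ ⟪Δ, g m⟫ +
        (1 / 2) * ⟪Δ, Matrix.toEuclideanLin (H + c • (1 : Matrix (Fin M) (Fin M) ℝ)) Δ⟫)
    (Δm : EuclideanSpace ℝ (Fin M)) (hfeas : m + Δm ∈ C)
    (hmin : ∀ Δ : EuclideanSpace ℝ (Fin M), m + Δ ∈ C →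
      ⟪Δm, g m⟫ +
          (1 / 2) * ⟪Δm, Matrix.toEuclideanLin (H + c • (1 : Matrix (Fin M) (Fin M) ℝ)) Δm⟫ ≤
        ⟪Δ, g m⟫ +
          (1 / 2) * ⟪Δ, Matrix.toEuclideanLin (H + c • (1 : Matrix (Fin M) (Fin M) ℝ)) Δ⟫)
    (hne : Δm ≠ 0) :
    f (m + Δm) < f m := by
  set A := Matrix.toEuclideanLin (H + c • (1 : Matrix (Fin M) (Fin M) ℝ)) with hA
  set a := ⟪Δm, g m⟫ with ha
  set b := (1 / 2) * ⟪Δm, A Δm⟫ with hb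
  have hbpos : 0 < b := by
    have := hpd Δm hne
    rw [hb]; linarith
  -- feasibility of 0
  have h0 : m + (0 : EuclideanSpace ℝ (Fin M)) ∈ C := by simpa using hm
  have hmin0 := hmin 0 h0
  simp only [inner_zero_left, map_zero, inner_zero_right, mul_zero, add_zero] at hmin0
  -- feasibility of (1/2) • Δm
  have hhalf : m + ((1/2 : ℝ)) • Δm ∈ C := by
    have := hC hm hfeas (by norm_num : (0:ℝ) ≤ 1/2) (by norm_num : (0:ℝ) ≤ 1/2) (by norm_num)
    convert this using 1
    module
  have hminh := hmin _ hhalf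
  rw [real_inner_smul_left, map_smul, real_inner_smul_left, real_inner_smul_right] at hminh
  -- so a + b < 0
  have hneg : a + b < 0 := by
    rcases lt_or_eq_of_le hmin0 with h | h
    · exact h
    · exfalso
      rw [hb] at hminh h
      nlinarith
  have := hbound Δm hfeas
  rw [← ha, ← hb] at this
  linarith
end

section
/- Let C ⊆ ℝ^M be a nonempty closed convex set, and let f : ℝ^M → ℝ be differentiable with K-Lipschitz gradient and bounded below on C. Let 0 < ρ ≤ Λ, σ ∈ (0,1], and let (Qₙ) be a sequence of symmetric M×M matrices with ρ‖x‖² ≤ xᵀQₙx ≤ Λ‖x‖² for all x and all n. Let m⁰ ∈ C and define mⁿ⁺¹ = mⁿ + Δmⁿ, where Δmⁿ minimizes q_n(Δ) = Δᵀ∇f(mⁿ) + (1/2)ΔᵀQₙΔ over {Δ : mⁿ + Δ ∈ C}, and assume the sufficient-decrease condition f(mⁿ⁺¹) − f(mⁿ) ≤ σ·q_n(Δmⁿ) holds for every n. Then every cluster point m* of the sequence (mⁿ) lies in C and is a stationary point of the constrained problem, i.e. ⟨∇f(m*), m − m*⟩ ≥ 0 for all m ∈ C. -/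
open scoped RealInnerProductSpace

/-- Convergence of the scaled gradient projection method (Algorithm 1): every cluster point
of the iterates is a stationary point of the constrained problem. -/
theorem stmt_5 {M : ℕ}
    (C : Set (EuclideanSpace ℝ (Fin M)))
    (hCne : C.Nonempty) (hCcl : IsClosed C) (hCconv : Convex ℝ C)
    (f : EuclideanSpace ℝ (Fin M) → ℝ)
    (g : EuclideanSpace ℝ (Fin M) → EuclideanSpace ℝ (Fin M))
    (hgrad : ∀ x, HasGradientAt f (g x) x)
    (K : ℝ) (hK : ∀ x y, ‖g x - g y‖ ≤ K * ‖x - y‖)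
    (hbdd : ∃ B : ℝ, ∀ x ∈ C, B ≤ f x)
    (ρ Λ σ : ℝ) (hρ : 0 < ρ) (hρΛ : ρ ≤ Λ) (hσ0 : 0 < σ) (hσ1 : σ ≤ 1)
    (Q : ℕ → Matrix (Fin M) (Fin M) ℝ) (hQsymm : ∀ n, (Q n).IsSymm)
    (hQlow : ∀ n, ∀ x : EuclideanSpace ℝ (Fin M),
      ρ * ‖x‖ ^ 2 ≤ ⟪x, Matrix.toEuclideanLin (Q n) x⟫)
    (hQhigh : ∀ n, ∀ x : EuclideanSpace ℝ (Fin M),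
      ⟪x, Matrix.toEuclideanLin (Q n) x⟫ ≤ Λ * ‖x‖ ^ 2)
    (m : ℕ → EuclideanSpace ℝ (Fin M)) (hm0 : m 0 ∈ C)
    (hfeas : ∀ n, m (n + 1) ∈ C)
    (hmin : ∀ n, ∀ Δ : EuclideanSpace ℝ (Fin M), m n + Δ ∈ C →
      ⟪m (n + 1) - m n, g (m n)⟫ +
          (1 / 2) * ⟪m (n + 1) - m n, Matrix.toEuclideanLin (Q n) (m (n + 1) - m n)⟫ ≤
        ⟪Δ, g (m n)⟫ + (1 / 2) * ⟪Δ, Matrix.toEuclideanLin (Q n) Δ⟫)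
    (hdec : ∀ n, f (m (n + 1)) - f (m n) ≤
      σ * (⟪m (n + 1) - m n, g (m n)⟫ +
        (1 / 2) * ⟪m (n + 1) - m n, Matrix.toEuclideanLin (Q n) (m (n + 1) - m n)⟫))
    (mstar : EuclideanSpace ℝ (Fin M))
    (hcluster : ∃ φ : ℕ → ℕ, StrictMono φ ∧
      Filter.Tendsto (fun k => m (φ k)) Filter.atTop (nhds mstar)) :
    mstar ∈ C ∧ ∀ x ∈ C, 0 ≤ ⟪g mstar, x - mstar⟫ := by
  obtain ⟨φ, hφmono, hφtend⟩ := hcluster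
  have hmC : ∀ n, m n ∈ C := by
    intro n; cases n with
    | zero => exact hm0
    | succ k => exact hfeas k
  set q : ℕ → ℝ := fun n => ⟪m (n + 1) - m n, g (m n)⟫ +
      (1 / 2) * ⟪m (n + 1) - m n, Matrix.toEuclideanLin (Q n) (m (n + 1) - m n)⟫ with hqdef
  have hq0 : ∀ n, q n ≤ 0 := by
    intro n
    have h := hmin n 0 (by simpa using hmC n)
    simpa [hqdef] using h
  have hσq : ∀ n, σ * q n ≤ 0 := fun n => mul_nonpos_of_nonneg_of_nonpos hσ0.le (hq0 n)
  have hanti : Antitone (fun n => f (m n)) := by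
    apply antitone_nat_of_succ_le
    intro n
    have h1 := hdec n
    have h2 := hσq n
    simp only [hqdef] at h2
    linarith
  obtain ⟨B, hB⟩ := hbdd
  have hbdd' : BddBelow (Set.range fun n => f (m n)) := by
    refine ⟨B, ?_⟩
    rintro _ ⟨n, rfl⟩
    exact hB _ (hmC n)
  have htendf : Filter.Tendsto (fun n => f (m n)) Filter.atTop (nhds (⨅ n, f (m n))) :=
    tendsto_atTop_ciInf hanti hbdd'
  have htendf' : Filter.Tendsto (fun n => f (m (n + 1))) Filter.atTop (nhds (⨅ n, f (m n))) :=
    htendf.comp (Filter.tendsto_add_atTop_nat 1)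
  have hd0 : Filter.Tendsto (fun n => f (m (n + 1)) - f (m n)) Filter.atTop (nhds 0) := by
    simpa using htendf'.sub htendf
  have hσq0 : Filter.Tendsto (fun n => σ * q n) Filter.atTop (nhds 0) :=
    tendsto_of_tendsto_of_tendsto_of_le_of_le hd0 tendsto_const_nhds (fun n => hdec n) hσq
  have hqtend : Filter.Tendsto q Filter.atTop (nhds 0) := by
    have h := hσq0.const_mul σ⁻¹
    simpa [inv_mul_cancel_left₀ hσ0.ne'] using h
  have hmstarC : mstar ∈ C :=
    hCcl.mem_of_tendsto hφtend (Filter.Eventually.of_forall fun k => hmC (φ k))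
  have hmsub : Filter.Tendsto (fun k => m (φ k) - mstar) Filter.atTop (nhds 0) := by
    simpa using hφtend.sub (tendsto_const_nhds (x := mstar))
  have hgtend : Filter.Tendsto (fun k => g (m (φ k))) Filter.atTop (nhds (g mstar)) := by
    rw [tendsto_iff_norm_sub_tendsto_zero]
    have h1 : Filter.Tendsto (fun k => K * ‖m (φ k) - mstar‖) Filter.atTop (nhds 0) := by
      simpa using (hmsub.norm.const_mul K)
    exact squeeze_zero (fun k => norm_nonneg _) (fun k => hK _ _) h1
  refine ⟨hmstarC, fun x hx => ?_⟩
  set a : ℝ := ⟪x - mstar, g mstar⟫ with hadef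
  set c : ℝ := Λ / 2 * ‖x - mstar‖ ^ 2 with hcdef
  have hΛ : 0 < Λ := lt_of_lt_of_le hρ hρΛ
  have hc : 0 ≤ c := by positivity
  have key : ∀ t : ℝ, 0 < t → t ≤ 1 → 0 ≤ t * a + t ^ 2 * c := by
    intro t ht0 ht1
    have hS : ∀ k, q (φ k) ≤
        t * ⟪x - m (φ k), g (m (φ k))⟫ + t ^ 2 * (Λ / 2 * ‖x - m (φ k)‖ ^ 2) := by
      intro k
      set n := φ k with hn
      have hmem : m n + t • (x - m n) ∈ C := by
        have h := hCconv (hmC n) hx (by linarith : (0:ℝ) ≤ 1 - t) ht0.le (by ring)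
        convert h using 1
        module
      have h1 := hmin n (t • (x - m n)) hmem
      have e1 : ⟪t • (x - m n), g (m n)⟫ = t * ⟪x - m n, g (m n)⟫ :=
        real_inner_smul_left _ _ _
      have e2 : ⟪t • (x - m n), Matrix.toEuclideanLin (Q n) (t • (x - m n))⟫
          = t ^ 2 * ⟪x - m n, Matrix.toEuclideanLin (Q n) (x - m n)⟫ := by
        rw [map_smul, real_inner_smul_left, real_inner_smul_right]
        ring
      rw [e1, e2] at h1
      have h2 := hQhigh n (x - m n)
      have ht2 : (0:ℝ) ≤ t ^ 2 := sq_nonneg t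
      calc q n ≤ t * ⟪x - m n, g (m n)⟫
            + 1 / 2 * (t ^ 2 * ⟪x - m n, Matrix.toEuclideanLin (Q n) (x - m n)⟫) := h1
        _ ≤ t * ⟪x - m n, g (m n)⟫ + t ^ 2 * (Λ / 2 * ‖x - m n‖ ^ 2) := by nlinarith
    have hStend : Filter.Tendsto
        (fun k => t * ⟪x - m (φ k), g (m (φ k))⟫ + t ^ 2 * (Λ / 2 * ‖x - m (φ k)‖ ^ 2))
        Filter.atTop (nhds (t * a + t ^ 2 * c)) := by
      have hxm : Filter.Tendsto (fun k => x - m (φ k)) Filter.atTop (nhds (x - mstar)) :=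
        (tendsto_const_nhds (x := x)).sub hφtend
      have hinner : Filter.Tendsto (fun k => (⟪x - m (φ k), g (m (φ k))⟫ : ℝ))
          Filter.atTop (nhds a) := hxm.inner hgtend
      have hnorm : Filter.Tendsto (fun k => Λ / 2 * ‖x - m (φ k)‖ ^ 2)
          Filter.atTop (nhds c) := ((hxm.norm.pow 2).const_mul (Λ / 2))
      exact (hinner.const_mul t).add (hnorm.const_mul (t ^ 2))
    have hqφ : Filter.Tendsto (fun k => q (φ k)) Filter.atTop (nhds 0) :=
      hqtend.comp hφmono.tendsto_atTop
    exact le_of_tendsto_of_tendsto' hqφ hStend hS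
  have hfin : ∀ k : ℕ, -(1 / (k + 1 : ℝ)) * c ≤ a := by
    intro k
    have hk0 : (0:ℝ) < 1 / (k + 1 : ℝ) := by positivity
    have hk1 : (1 / (k + 1 : ℝ)) ≤ 1 := by
      rw [div_le_one (by positivity)]
      linarith [Nat.cast_nonneg (α := ℝ) k]
    have h := key _ hk0 hk1
    nlinarith
  have htend0 : Filter.Tendsto (fun k : ℕ => -(1 / (k + 1 : ℝ)) * c)
      Filter.atTop (nhds 0) := by
    have h := (tendsto_one_div_add_atTop_nhds_zero_nat).neg.mul_const c
    simpa using h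
  have ha : 0 ≤ a := le_of_tendsto' htend0 hfin
  rw [real_inner_comm]
  exact ha
end

section
/- Let M ≥ 1, x : Fin M → ℝ, and ξ ≥ 0. Consider ψ(p) = Σᵢ pᵢxᵢ − ξ·maxᵢ pᵢ, defined for p : Fin M → ℝ with pᵢ ≥ 0 for all i. Then ψ is bounded above over {p : p ≥ 0} if and only if Σᵢ max(0, xᵢ) ≤ ξ, in which case its supremum equals 0 (attained at p = 0). Equivalently, sup_{p ≥ 0} {⟨p, x⟩ − ξ·max(p)} is the indicator function of the asymmetric (one-sided) TV ball {x : ‖max(0, x)‖₁ ≤ ξ}. -/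
/-- Conjugate representation of the asymmetric (one-sided) TV ball: over the nonnegative
orthant, `p ↦ ⟨p, x⟩ − ξ·max(p)` is bounded above iff `Σᵢ max(0, xᵢ) ≤ ξ`, in which case
its supremum is `0`, attained at `p = 0`. -/
theorem stmt_8 {M : ℕ} (hM : 1 ≤ M) (x : Fin M → ℝ) (ξ : ℝ) (hξ : 0 ≤ ξ) :
    ((∃ B : ℝ, ∀ p : Fin M → ℝ, (∀ i, 0 ≤ p i) →
        (∑ i, p i * x i) -
            ξ * (Finset.univ.sup' (Finset.univ_nonempty_iff.mpr ⟨⟨0, hM⟩⟩) p) ≤ B) ↔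
      (∑ i, max 0 (x i)) ≤ ξ) ∧
    ((∑ i, max 0 (x i)) ≤ ξ →
      (∀ p : Fin M → ℝ, (∀ i, 0 ≤ p i) →
        (∑ i, p i * x i) -
            ξ * (Finset.univ.sup' (Finset.univ_nonempty_iff.mpr ⟨⟨0, hM⟩⟩) p) ≤ 0) ∧
      (∑ i, (0 : Fin M → ℝ) i * x i) -
          ξ * (Finset.univ.sup' (Finset.univ_nonempty_iff.mpr ⟨⟨0, hM⟩⟩)
            (0 : Fin M → ℝ)) = 0) := by
  set S : ℝ := ∑ i, max 0 (x i) with hS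
  have hne : (Finset.univ : Finset (Fin M)).Nonempty := Finset.univ_nonempty_iff.mpr ⟨⟨0, hM⟩⟩
  -- main bound: if S ≤ ξ then ψ(p) ≤ 0 for p ≥ 0
  have key : S ≤ ξ → ∀ p : Fin M → ℝ, (∀ i, 0 ≤ p i) →
      (∑ i, p i * x i) - ξ * (Finset.univ.sup' hne p) ≤ 0 := by
    intro hSξ p hp
    set m : ℝ := Finset.univ.sup' hne p with hm
    have hmle : ∀ i, p i ≤ m := fun i => Finset.le_sup' p (Finset.mem_univ i)
    have hm0 : 0 ≤ m := le_trans (hp hne.choose) (hmle hne.choose)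
    have h1 : (∑ i, p i * x i) ≤ ∑ i, m * max 0 (x i) := by
      apply Finset.sum_le_sum
      intro i _
      calc p i * x i ≤ p i * max 0 (x i) := by
            exact mul_le_mul_of_nonneg_left (le_max_right _ _) (hp i)
        _ ≤ m * max 0 (x i) := mul_le_mul_of_nonneg_right (hmle i) (le_max_left _ _)
    have h2 : ∑ i, m * max 0 (x i) = m * S := by rw [hS, Finset.mul_sum]
    have h3 : m * S ≤ m * ξ := mul_le_mul_of_nonneg_left hSξ hm0
    nlinarith [h1, h3]
  constructor
  · constructor
    · rintro ⟨B, hB⟩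
      by_contra h
      push_neg at h
      -- h : ξ < S
      have hSpos : 0 < S := lt_of_le_of_lt hξ h
      -- some coordinate has x i > 0
      have hex : ∃ i, 0 < x i := by
        by_contra hno
        push_neg at hno
        have : S = 0 := by
          rw [hS]
          apply Finset.sum_eq_zero
          intro i _
          exact max_eq_left (hno i)
        linarith
      obtain ⟨i₀, hi₀⟩ := hex
      set t : ℝ := (max B 0 + 1) / (S - ξ) with ht
      have htpos : 0 < t := by
        apply div_pos
        · have := le_max_right B (0:ℝ); linarith
        · linarith
      set p : Fin M → ℝ := fun i => if 0 < x i then t else 0 with hpdef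
      have hp : ∀ i, 0 ≤ p i := by
        intro i; simp only [hpdef]; split <;> [exact htpos.le; exact le_rfl]
      have hsum : (∑ i, p i * x i) = t * S := by
        rw [hS, Finset.mul_sum]
        apply Finset.sum_congr rfl
        intro i _
        simp only [hpdef]
        by_cases hxi : 0 < x i
        · rw [if_pos hxi, max_eq_right hxi.le, mul_comm]
        · rw [if_neg hxi, max_eq_left (le_of_not_gt hxi)]; ring
      have hsup : Finset.univ.sup' hne p = t := by
        apply le_antisymm
        · apply Finset.sup'_le
          intro i _
          simp only [hpdef]
          split <;> [exact le_rfl; exact htpos.le]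
        · have : p i₀ = t := by simp only [hpdef, if_pos hi₀]
          calc t = p i₀ := this.symm
            _ ≤ _ := Finset.le_sup' p (Finset.mem_univ i₀)
      have := hB p hp
      rw [hsum, hsup] at this
      have hval : t * S - ξ * t = max B 0 + 1 := by
        have : t * (S - ξ) = max B 0 + 1 := by
          rw [ht, div_mul_eq_mul_div, mul_div_assoc, div_self (by linarith : S - ξ ≠ 0), mul_one]
        nlinarith [this]
      rw [hval] at this
      have := le_max_left B (0:ℝ)
      linarith
    · intro hSξ
      exact ⟨0, key hSξ⟩
  · intro hSξ
    refine ⟨key hSξ, ?_⟩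
    simp
end

section
/- Let M ≥ 1, δ > 0, τ ≥ 0, and p₀, w : Fin M → ℝ². Set z = p₀ + δw and let B = {q : Fin M → ℝ² : Σᵢ‖qᵢ‖ ≤ τδ}. If q* ∈ B is the point of B closest to z in the Euclidean norm (i.e. ‖q* − z‖ ≤ ‖q − z‖ for all q ∈ B), then p* = z − q* is the unique minimizer over p : Fin M → ℝ² of the PDHG dual update objective p ↦ τ·maxᵢ‖pᵢ‖ − ⟨p, w⟩ + (1/(2δ))‖p − p₀‖². -/
open scoped RealInnerProductSpace

lemma aux_expand {E : Type*} [NormedAddCommGroup E] [InnerProductSpace ℝ E] (u d : E) (t : ℝ) :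
    ‖u + t • d‖^2 = ‖u‖^2 + 2*t*⟪u,d⟫ + t^2*‖d‖^2 := by
  rw [norm_add_sq_real, real_inner_smul_right, norm_smul]
  rw [Real.norm_eq_abs, mul_pow, sq_abs]; ring

lemma aux_expand_sub {E : Type*} [NormedAddCommGroup E] [InnerProductSpace ℝ E] (u d : E) (t : ℝ) :
    ‖u - t • d‖^2 = ‖u‖^2 - 2*t*⟪u,d⟫ + t^2*‖d‖^2 := by
  have h : u - t•d = u + t•(-d) := by module
  rw [h, aux_expand]; simp [inner_neg_right]; ring

set_option maxHeartbeats 1000000 in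
/-- Moreau-decomposition form of the PDHG dual update for the TV constraint: if `q*` is the
projection of `z = p₀ + δw` onto the `ℓ_{1,2}` ball of radius `τδ`, then `p* = z − q*` is
the unique minimizer of `p ↦ τ‖p‖_{∞,2} − ⟨p, w⟩ + (1/(2δ))‖p − p₀‖²`. -/
theorem stmt_10 {M : ℕ} (hM : 1 ≤ M) (δ τ : ℝ) (hδ : 0 < δ) (hτ : 0 ≤ τ)
    (p₀ w z : Fin M → EuclideanSpace ℝ (Fin 2))
    (hz : z = fun i => p₀ i + δ • w i)
    (qstar : Fin M → EuclideanSpace ℝ (Fin 2))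
    (hqfeas : (∑ i, ‖qstar i‖) ≤ τ * δ)
    (hqproj : ∀ q : Fin M → EuclideanSpace ℝ (Fin 2), (∑ i, ‖q i‖) ≤ τ * δ →
      (∑ i, ‖qstar i - z i‖ ^ 2) ≤ ∑ i, ‖q i - z i‖ ^ 2)
    (pstar : Fin M → EuclideanSpace ℝ (Fin 2)) (hp : pstar = fun i => z i - qstar i) :
    ∀ p : Fin M → EuclideanSpace ℝ (Fin 2), p ≠ pstar →
      τ * (Finset.univ.sup' (Finset.univ_nonempty_iff.mpr ⟨⟨0, hM⟩⟩)
              fun i => ‖pstar i‖) -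
          (∑ i, ⟪pstar i, w i⟫) + (1 / (2 * δ)) * ∑ i, ‖pstar i - p₀ i‖ ^ 2 <
        τ * (Finset.univ.sup' (Finset.univ_nonempty_iff.mpr ⟨⟨0, hM⟩⟩)
              fun i => ‖p i‖) -
          (∑ i, ⟪p i, w i⟫) + (1 / (2 * δ)) * ∑ i, ‖p i - p₀ i‖ ^ 2 := by
  intro p hpne
  set K := Finset.univ_nonempty_iff.mpr (⟨⟨0, hM⟩⟩ : Nonempty (Fin M)) with hK
  set Ss := Finset.univ.sup' K fun i => ‖pstar i‖ with hSs
  set Sp := Finset.univ.sup' K fun i => ‖p i‖ with hSp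
  set Ws := ∑ i, ⟪pstar i, w i⟫ with hWs
  set Wp := ∑ i, ⟪p i, w i⟫ with hWp
  set N₀s := ∑ i, ‖pstar i - p₀ i‖^2 with hN₀s'
  set N₀p := ∑ i, ‖p i - p₀ i‖^2 with hN₀p'
  have hz' : ∀ i, z i = p₀ i + δ • w i := fun i => by rw [hz]
  have hps : ∀ i, pstar i = z i - qstar i := fun i => by rw [hp]
  have hzi : ∀ i, z i = pstar i + qstar i := fun i => by rw [hps i]; abel
  -- basic sup facts
  have hSsle : ∀ i, ‖pstar i‖ ≤ Ss := fun i => by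
    rw [hSs]; exact Finset.le_sup' (fun j => ‖pstar j‖) (Finset.mem_univ i)
  have hSple : ∀ i, ‖p i‖ ≤ Sp := fun i => by
    rw [hSp]; exact Finset.le_sup' (fun j => ‖p j‖) (Finset.mem_univ i)
  have hSs0 : 0 ≤ Ss := le_trans (norm_nonneg _) (hSsle ⟨0, hM⟩)
  have hSp0 : 0 ≤ Sp := le_trans (norm_nonneg _) (hSple ⟨0, hM⟩)
  -- Hölder inequality
  have hA : ∀ (r : Fin M → EuclideanSpace ℝ (Fin 2)) (Sr : ℝ), (∀ i, ‖r i‖ ≤ Sr) → 0 ≤ Sr →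
      (∑ i, ⟪r i, qstar i⟫) ≤ τ * δ * Sr := by
    intro r Sr hle h0
    calc (∑ i, ⟪r i, qstar i⟫) ≤ ∑ i, Sr * ‖qstar i‖ := by
          apply Finset.sum_le_sum; intro i _
          calc ⟪r i, qstar i⟫ ≤ ‖r i‖ * ‖qstar i‖ := real_inner_le_norm _ _
            _ ≤ Sr * ‖qstar i‖ := mul_le_mul_of_nonneg_right (hle i) (norm_nonneg _)
      _ = Sr * ∑ i, ‖qstar i‖ := by rw [← Finset.mul_sum]
      _ ≤ Sr * (τ * δ) := mul_le_mul_of_nonneg_left hqfeas h0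
      _ = τ * δ * Sr := by ring
  -- variational inequality of the projection
  have hproj' : ∀ qh : Fin M → EuclideanSpace ℝ (Fin 2), (∑ i, ‖qh i‖) ≤ τ * δ →
      (∑ i, ⟪pstar i, qh i - qstar i⟫) ≤ 0 := by
    intro qh hfeas
    set a := ∑ i, ⟪pstar i, qh i - qstar i⟫ with ha'
    set C := ∑ i, ‖qh i - qstar i‖^2 with hC'
    have hC0 : 0 ≤ C := Finset.sum_nonneg fun i _ => sq_nonneg _
    have key : ∀ t : ℝ, 0 ≤ t → t ≤ 1 → 0 ≤ -2*t*a + t^2*C := by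
      intro t ht0 ht1
      have hfe : (∑ i, ‖qstar i + t • (qh i - qstar i)‖) ≤ τ * δ := by
        calc (∑ i, ‖qstar i + t • (qh i - qstar i)‖)
            ≤ ∑ i, ((1-t) * ‖qstar i‖ + t * ‖qh i‖) := by
              apply Finset.sum_le_sum; intro i _
              have e : qstar i + t • (qh i - qstar i) = (1-t) • qstar i + t • qh i := by module
              rw [e]
              calc ‖(1-t) • qstar i + t • qh i‖ ≤ ‖(1-t) • qstar i‖ + ‖t • qh i‖ :=
                    norm_add_le _ _
                _ = (1-t) * ‖qstar i‖ + t * ‖qh i‖ := by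
                    rw [norm_smul, norm_smul, Real.norm_eq_abs, Real.norm_eq_abs,
                      abs_of_nonneg (by linarith), abs_of_nonneg ht0]
          _ = (1-t) * (∑ i, ‖qstar i‖) + t * (∑ i, ‖qh i‖) := by
              rw [Finset.sum_add_distrib, ← Finset.mul_sum, ← Finset.mul_sum]
          _ ≤ (1-t) * (τ*δ) + t * (τ*δ) :=
              add_le_add (mul_le_mul_of_nonneg_left hqfeas (by linarith))
                (mul_le_mul_of_nonneg_left hfeas ht0)
          _ = τ * δ := by ring
      have h2 := hqproj _ hfe
      have hexp : (∑ i, ‖(qstar i + t • (qh i - qstar i)) - z i‖^2)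
          = (∑ i, ‖qstar i - z i‖^2) + (-2*t*a + t^2*C) := by
        have hper : ∀ i, ‖(qstar i + t • (qh i - qstar i)) - z i‖^2
            = ‖qstar i - z i‖^2 + (-2*t*⟪pstar i, qh i - qstar i⟫ + t^2*‖qh i - qstar i‖^2) := by
          intro i
          have e : (qstar i + t • (qh i - qstar i)) - z i
              = (qstar i - z i) + t • (qh i - qstar i) := by module
          rw [e, aux_expand]
          have e2 : qstar i - z i = -pstar i := by rw [hps i]; abel
          rw [e2, inner_neg_left]; ring
        rw [Finset.sum_congr rfl fun i _ => hper i, Finset.sum_add_distrib,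
          Finset.sum_add_distrib, ← Finset.mul_sum, ← Finset.mul_sum, ha', hC']
      rw [hexp] at h2; linarith
    -- conclude a ≤ 0
    by_contra h
    push_neg at h
    rcases eq_or_lt_of_le hC0 with hC | hC
    · have := key 1 zero_le_one le_rfl
      nlinarith
    · have htpos : 0 < min 1 (a / C) := lt_min one_pos (div_pos h hC)
      have ht1 : min 1 (a / C) ≤ 1 := min_le_left _ _
      have htC : min 1 (a / C) * C ≤ a := by
        calc min 1 (a / C) * C ≤ (a / C) * C :=
              mul_le_mul_of_nonneg_right (min_le_right _ _) hC0
          _ = a := div_mul_cancel₀ _ (ne_of_gt hC)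
      have := key _ htpos.le ht1
      nlinarith
  -- sharpness: τδ Ss ≤ ⟨p*, q*⟩
  have hB : τ * δ * Ss ≤ ∑ i, ⟪pstar i, qstar i⟫ := by
    rcases eq_or_lt_of_le hSs0 with h0 | hpos
    · have hall : ∀ i, pstar i = 0 := by
        intro i
        have := hSsle i
        rw [← h0] at this
        exact norm_eq_zero.mp (le_antisymm this (norm_nonneg _))
      rw [← h0]
      simp [hall]
    · obtain ⟨i₀, -, hi₀⟩ := Finset.exists_mem_eq_sup' K fun i => ‖pstar i‖
      have hm : 0 < ‖pstar i₀‖ := by rw [← hi₀]; exact hpos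
      set c := τ * δ / ‖pstar i₀‖ with hc'
      have hc0 : 0 ≤ c := div_nonneg (mul_nonneg hτ hδ.le) hm.le
      set qh : Fin M → EuclideanSpace ℝ (Fin 2) :=
        fun i => if i = i₀ then c • pstar i₀ else 0 with hqh
      have hnorm : ∀ i, ‖qh i‖ = if i = i₀ then τ * δ else 0 := by
        intro i
        by_cases h : i = i₀
        · rw [if_pos h]
          have e : qh i = c • pstar i₀ := by rw [hqh]; simp [h]
          rw [e, norm_smul, Real.norm_eq_abs, abs_of_nonneg hc0, hc',
            div_mul_cancel₀ _ (ne_of_gt hm)]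
        · rw [if_neg h]
          have e : qh i = 0 := by rw [hqh]; simp [h]
          rw [e, norm_zero]
      have hfe : (∑ i, ‖qh i‖) ≤ τ * δ := by
        rw [Finset.sum_congr rfl fun i _ => hnorm i, Finset.sum_ite_eq' Finset.univ i₀]
        simp
      have hvar := hproj' qh hfe
      have hsplit : (∑ i, ⟪pstar i, qh i - qstar i⟫)
          = (∑ i, ⟪pstar i, qh i⟫) - ∑ i, ⟪pstar i, qstar i⟫ := by
        rw [← Finset.sum_sub_distrib]
        exact Finset.sum_congr rfl fun i _ => inner_sub_right _ _ _
      have hqhsum : (∑ i, ⟪pstar i, qh i⟫) = τ * δ * Ss := by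
        have hper : ∀ i, ⟪pstar i, qh i⟫ = if i = i₀ then τ * δ * Ss else 0 := by
          intro i
          by_cases h : i = i₀
          · rw [if_pos h, h]
            have e : qh i₀ = c • pstar i₀ := by rw [hqh]; simp
            rw [e, real_inner_smul_right, real_inner_self_eq_norm_sq, hSs, hi₀, hc']
            field_simp
          · rw [if_neg h]
            have e : qh i = 0 := by rw [hqh]; simp [h]
            rw [e, inner_zero_right]
        rw [Finset.sum_congr rfl fun i _ => hper i, Finset.sum_ite_eq' Finset.univ i₀]
        simp
      rw [hsplit, hqhsum] at hvar
      linarith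
  -- sum identities
  have I1 : ∀ r : Fin M → EuclideanSpace ℝ (Fin 2),
      (∑ i, ‖r i - z i‖^2) = (∑ i, ‖r i - p₀ i‖^2) - 2*δ*(∑ i, ⟪r i, w i⟫)
        + 2*δ*(∑ i, ⟪p₀ i, w i⟫) + δ^2*(∑ i, ‖w i‖^2) := by
    intro r
    have hper : ∀ i, ‖r i - z i‖^2 = ‖r i - p₀ i‖^2 - 2*δ*⟪r i, w i⟫
        + 2*δ*⟪p₀ i, w i⟫ + δ^2*‖w i‖^2 := by
      intro i
      have e : r i - z i = (r i - p₀ i) - δ • w i := by rw [hz' i]; abel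
      rw [e, aux_expand_sub, inner_sub_left]
      ring
    rw [Finset.sum_congr rfl fun i _ => hper i, Finset.sum_add_distrib,
      Finset.sum_add_distrib, Finset.sum_sub_distrib, ← Finset.mul_sum,
      ← Finset.mul_sum, ← Finset.mul_sum]
  have I2 : ∀ r : Fin M → EuclideanSpace ℝ (Fin 2),
      (∑ i, ‖r i - z i‖^2) = (∑ i, ‖r i - pstar i‖^2) - 2*(∑ i, ⟪r i, qstar i⟫)
        + 2*(∑ i, ⟪pstar i, qstar i⟫) + (∑ i, ‖qstar i‖^2) := by
    intro r
    have hper : ∀ i, ‖r i - z i‖^2 = ‖r i - pstar i‖^2 - 2*⟪r i, qstar i⟫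
        + 2*⟪pstar i, qstar i⟫ + ‖qstar i‖^2 := by
      intro i
      have e : r i - z i = (r i - pstar i) - (1:ℝ) • qstar i := by rw [hzi i]; module
      rw [e, aux_expand_sub, inner_sub_left]
      ring
    rw [Finset.sum_congr rfl fun i _ => hper i, Finset.sum_add_distrib,
      Finset.sum_add_distrib, Finset.sum_sub_distrib, ← Finset.mul_sum,
      ← Finset.mul_sum]
  have Ipz : (∑ i, ‖pstar i - z i‖^2) = ∑ i, ‖qstar i‖^2 := by
    apply Finset.sum_congr rfl
    intro i _
    have e : pstar i - z i = -qstar i := by rw [hps i]; abel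
    rw [e, norm_neg]
  -- strict positivity of the gap
  have hD : 0 < ∑ i, ‖p i - pstar i‖^2 := by
    obtain ⟨j, hj⟩ := Function.ne_iff.mp hpne
    refine Finset.sum_pos' (fun i _ => sq_nonneg _) ⟨j, Finset.mem_univ j, ?_⟩
    have hne0 : p j - pstar j ≠ 0 := sub_ne_zero.mpr hj
    exact pow_pos (norm_pos_iff.mpr hne0) 2
  -- combine
  have hQp : (∑ i, ⟪p i, qstar i⟫) ≤ τ * δ * Sp := hA p Sp hSple hSp0
  have I1p := I1 p
  have I1s := I1 pstar
  have I2p := I2 p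
  rw [← hWp, ← hN₀p'] at I1p
  rw [← hWs, ← hN₀s'] at I1s
  have h2δ : (0:ℝ) < 2 * δ := by linarith
  refine (mul_lt_mul_iff_right₀ h2δ).mp ?_
  have hL : 2 * δ * (τ * Ss - Ws + 1 / (2 * δ) * N₀s)
      = 2 * δ * (τ * Ss) - 2 * δ * Ws + N₀s := by
    field_simp
  have hR : 2 * δ * (τ * Sp - Wp + 1 / (2 * δ) * N₀p)
      = 2 * δ * (τ * Sp) - 2 * δ * Wp + N₀p := by
    field_simp
  rw [hL, hR]
  linarith [hQp, hB, hD, I1p, I1s, I2p, Ipz]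
end

section
/- Let M ≥ 1, δ > 0, ξ ≥ 0, and p₀, w : Fin M → ℝ. Set z = p₀ + δw and let C = {x : Fin M → ℝ : Σᵢ max(0, xᵢ) ≤ ξδ}. If x* ∈ C is the point of C closest to z in the Euclidean norm, then p* = z − x* is the unique minimizer of p ↦ ξ·maxᵢ pᵢ − ⟨p, w⟩ + (1/(2δ))‖p − p₀‖² over the nonnegative orthant {p : pᵢ ≥ 0 for all i}. -/
/-- Moreau-decomposition form of the PDHG dual update for the asymmetric TV constraint:
if `x*` is the projection of `z = p₀ + δw` onto `{x : Σᵢ max(0, xᵢ) ≤ ξδ}`, then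
`p* = z − x*` is the unique minimizer of `p ↦ ξ·max(p) − ⟨p, w⟩ + (1/(2δ))‖p − p₀‖²`
over the nonnegative orthant. -/
theorem stmt_11 {M : ℕ} (hM : 1 ≤ M) (δ ξ : ℝ) (hδ : 0 < δ) (hξ : 0 ≤ ξ)
    (p₀ w z : Fin M → ℝ) (hz : z = fun i => p₀ i + δ * w i)
    (xstar : Fin M → ℝ)
    (hxfeas : (∑ i, max 0 (xstar i)) ≤ ξ * δ)
    (hxproj : ∀ x : Fin M → ℝ, (∑ i, max 0 (x i)) ≤ ξ * δ →
      (∑ i, (xstar i - z i) ^ 2) ≤ ∑ i, (x i - z i) ^ 2)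
    (pstar : Fin M → ℝ) (hp : pstar = fun i => z i - xstar i) :
    (∀ i, 0 ≤ pstar i) ∧
    ∀ p : Fin M → ℝ, (∀ i, 0 ≤ p i) → p ≠ pstar →
      ξ * (Finset.univ.sup' (Finset.univ_nonempty_iff.mpr ⟨⟨0, hM⟩⟩) pstar) -
          (∑ i, pstar i * w i) + (1 / (2 * δ)) * ∑ i, (pstar i - p₀ i) ^ 2 <
        ξ * (Finset.univ.sup' (Finset.univ_nonempty_iff.mpr ⟨⟨0, hM⟩⟩) p) -
          (∑ i, p i * w i) + (1 / (2 * δ)) * ∑ i, (p i - p₀ i) ^ 2 := by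
  have ne : (Finset.univ : Finset (Fin M)).Nonempty :=
    Finset.univ_nonempty_iff.mpr ⟨⟨0, hM⟩⟩
  -- variational inequality for the projection
  have VI : ∀ x : Fin M → ℝ, (∑ i, max 0 (x i)) ≤ ξ * δ →
      ∑ i, pstar i * (x i - xstar i) ≤ 0 := by
    intro x hx
    set a := ∑ i, pstar i * (x i - xstar i) with ha
    set b := ∑ i, (x i - xstar i) ^ 2 with hb
    have hb0 : 0 ≤ b := Finset.sum_nonneg fun i _ => sq_nonneg _
    have key : ∀ t : ℝ, 0 ≤ t → t ≤ 1 → 2 * t * a ≤ t ^ 2 * b := by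
      intro t ht0 ht1
      have hfeas : (∑ i, max 0 (xstar i + t * (x i - xstar i))) ≤ ξ * δ := by
        have step : ∀ i : Fin M, max 0 (xstar i + t * (x i - xstar i)) ≤
            (1 - t) * max 0 (xstar i) + t * max 0 (x i) := by
          intro i
          have h1 : xstar i + t * (x i - xstar i) = (1 - t) * xstar i + t * x i := by ring
          rw [h1]
          refine max_le ?_ ?_
          · exact add_nonneg (mul_nonneg (by linarith) (le_max_left _ _))
              (mul_nonneg ht0 (le_max_left _ _))
          · exact add_le_add (mul_le_mul_of_nonneg_left (le_max_right _ _) (by linarith))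
              (mul_le_mul_of_nonneg_left (le_max_right _ _) ht0)
        calc (∑ i, max 0 (xstar i + t * (x i - xstar i)))
            ≤ ∑ i, ((1 - t) * max 0 (xstar i) + t * max 0 (x i)) :=
              Finset.sum_le_sum fun i _ => step i
          _ = (1 - t) * (∑ i, max 0 (xstar i)) + t * (∑ i, max 0 (x i)) := by
              rw [Finset.sum_add_distrib, Finset.mul_sum, Finset.mul_sum]
          _ ≤ ξ * δ := by
              have h1 : (0:ℝ) ≤ 1 - t := by linarith
              nlinarith [mul_le_mul_of_nonneg_left hxfeas h1,
                mul_le_mul_of_nonneg_left hx ht0]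
      have hpr := hxproj _ hfeas
      have hid : ∑ i, ((xstar i + t * (x i - xstar i)) - z i) ^ 2 =
          ∑ i, ((xstar i - z i) ^ 2 - 2 * t * (pstar i * (x i - xstar i)) +
            t ^ 2 * (x i - xstar i) ^ 2) := by
        refine Finset.sum_congr rfl fun i _ => ?_
        have hpi : pstar i = z i - xstar i := by simp [hp]
        rw [hpi]; ring
      rw [hid, Finset.sum_add_distrib, Finset.sum_sub_distrib, ← Finset.mul_sum,
        ← Finset.mul_sum] at hpr
      rw [ha, hb]
      linarith
    by_contra hcon
    push_neg at hcon
    set t : ℝ := min 1 (a / (b + 1)) with ht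
    have htpos : 0 < t := lt_min one_pos (div_pos hcon (by linarith))
    have ht1 : t ≤ 1 := min_le_left _ _
    have ht2 : t * (b + 1) ≤ a := by
      have := min_le_right 1 (a / (b + 1))
      exact (le_div_iff₀ (by linarith : (0:ℝ) < b + 1)).mp this
    have hk := key t htpos.le ht1
    nlinarith [mul_pos htpos hcon, mul_le_mul_of_nonneg_left ht2 htpos.le]
  -- nonnegativity of pstar
  have hpos : ∀ i, 0 ≤ pstar i := by
    intro i
    have hfe : (∑ j, max 0 (Function.update xstar i (xstar i - 1) j)) ≤ ξ * δ := by
      refine le_trans (Finset.sum_le_sum fun j _ => ?_) hxfeas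
      rcases eq_or_ne j i with h | h
      · subst h
        simp only [Function.update_self]
        exact max_le (le_max_left _ _)
          (by have := le_max_right (0:ℝ) (xstar j); linarith)
      · rw [Function.update_of_ne h]
    have h := VI _ hfe
    rw [Finset.sum_eq_single i (fun b _ hb => by
        rw [Function.update_of_ne hb]; ring)
      (fun hi => absurd (Finset.mem_univ i) hi)] at h
    simp only [Function.update_self] at h
    nlinarith
  -- support-function upper bound
  have claim3 : ∀ q : Fin M → ℝ, (∀ i, 0 ≤ q i) →
      (∑ i, q i * xstar i) ≤ ξ * δ * (Finset.univ.sup' ne q) := by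
    intro q hq
    have hSnn : 0 ≤ Finset.univ.sup' ne q :=
      le_trans (hq ⟨0, hM⟩) (Finset.le_sup' q (Finset.mem_univ _))
    calc (∑ i, q i * xstar i)
        ≤ ∑ i, (Finset.univ.sup' ne q) * max 0 (xstar i) := by
          refine Finset.sum_le_sum fun i _ => ?_
          have h1 : q i * xstar i ≤ q i * max 0 (xstar i) :=
            mul_le_mul_of_nonneg_left (le_max_right _ _) (hq i)
          have h2 : q i * max 0 (xstar i) ≤ (Finset.univ.sup' ne q) * max 0 (xstar i) :=
            mul_le_mul_of_nonneg_right (Finset.le_sup' q (Finset.mem_univ i)) (le_max_left _ _)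
          linarith
      _ = (Finset.univ.sup' ne q) * ∑ i, max 0 (xstar i) := (Finset.mul_sum _ _ _).symm
      _ ≤ (Finset.univ.sup' ne q) * (ξ * δ) := mul_le_mul_of_nonneg_left hxfeas hSnn
      _ = ξ * δ * (Finset.univ.sup' ne q) := by ring
  -- complementarity lower bound
  have claim4 : ξ * δ * (Finset.univ.sup' ne pstar) ≤ ∑ i, pstar i * xstar i := by
    obtain ⟨i₀, -, hi₀⟩ := Finset.exists_mem_eq_sup' ne pstar
    set x : Fin M → ℝ := fun j => if j = i₀ then ξ * δ else 0 with hxdef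
    have hfe : (∑ j, max 0 (x j)) ≤ ξ * δ := by
      have hxnn : (0:ℝ) ≤ ξ * δ := mul_nonneg hξ hδ.le
      have : ∀ j, max 0 (x j) = if j = i₀ then ξ * δ else 0 := by
        intro j
        by_cases h : j = i₀ <;> simp [hxdef, h, max_eq_right hxnn]
      rw [Finset.sum_congr rfl fun j _ => this j]
      simp
    have h := VI x hfe
    have hsplit : ∑ j, pstar j * (x j - xstar j) =
        (∑ j, pstar j * x j) - ∑ j, pstar j * xstar j := by
      rw [← Finset.sum_sub_distrib]
      exact Finset.sum_congr rfl fun j _ => by ring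
    have hxsum : ∑ j, pstar j * x j = ξ * δ * pstar i₀ := by
      rw [Finset.sum_eq_single i₀ (fun b _ hb => by simp [hxdef, hb])
        (fun hi => absurd (Finset.mem_univ i₀) hi)]
      simp [hxdef]; ring
    rw [hsplit, hxsum] at h
    rw [hi₀]
    linarith
  refine ⟨hpos, ?_⟩
  intro p hq hne
  -- positivity of the strong-convexity term
  have hA : 0 < ∑ i, (p i - pstar i) ^ 2 := by
    have : ∃ i, p i ≠ pstar i := by
      by_contra hc
      push_neg at hc
      exact hne (funext hc)
    obtain ⟨i, hi⟩ := this
    refine Finset.sum_pos' (fun j _ => sq_nonneg _) ⟨i, Finset.mem_univ i, ?_⟩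
    exact lt_of_le_of_ne (sq_nonneg _) (Ne.symm (pow_ne_zero 2 (sub_ne_zero.mpr hi)))
  have H1 : ∑ i, (p i - p₀ i) ^ 2 =
      (∑ i, (p i - pstar i) ^ 2) + 2 * δ * (∑ i, p i * w i) - 2 * δ * (∑ i, pstar i * w i)
        - 2 * (∑ i, p i * xstar i) + 2 * (∑ i, pstar i * xstar i)
        + ∑ i, (pstar i - p₀ i) ^ 2 := by
    have hterm : ∀ i, (p i - p₀ i) ^ 2 =
        (p i - pstar i) ^ 2 + 2 * δ * (p i * w i) - 2 * δ * (pstar i * w i)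
          - 2 * (p i * xstar i) + 2 * (pstar i * xstar i) + (pstar i - p₀ i) ^ 2 := by
      intro i
      have h1 : pstar i = p₀ i + δ * w i - xstar i := by simp [hp, hz]
      rw [h1]; ring
    rw [Finset.sum_congr rfl fun i _ => hterm i]
    simp only [Finset.sum_add_distrib, Finset.sum_sub_distrib, ← Finset.mul_sum]
  have h3p := claim3 p hq
  have h3s := claim4
  have key2 : (∑ i, (pstar i - p₀ i) ^ 2) +
      2 * δ * (ξ * (Finset.univ.sup' ne pstar) - ∑ i, pstar i * w i) <
      (∑ i, (p i - p₀ i) ^ 2) +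
      2 * δ * (ξ * (Finset.univ.sup' ne p) - ∑ i, p i * w i) := by
    rw [H1]; nlinarith [h3p, h3s, hA]
  have hd : (0:ℝ) < 1 / (2 * δ) := by positivity
  have hfin := mul_lt_mul_of_pos_left key2 hd
  have e : ∀ Q S Pw : ℝ, 1 / (2 * δ) * (Q + 2 * δ * (ξ * S - Pw)) =
      ξ * S - Pw + 1 / (2 * δ) * Q := by
    intro Q S Pw; field_simp; ring
  rw [e, e] at hfin
  exact hfin
end

section
/- Let A be an invertible n×n real matrix, P an r×n real matrix, q ∈ ℝⁿ, d ∈ ℝʳ. For λ > 0 let u_λ = (AᵀA + λ⁻²PᵀP)⁻¹(Aᵀq + λ⁻²Pᵀd) (this matrix is invertible for all sufficiently large λ since A is invertible). Then u_λ converges to A⁻¹q as λ → ∞. -/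
open Matrix

/-! As `λ → ∞` the penalty weight `λ⁻²` tends to `0`, so the normal matrix `AᵀA + λ⁻²PᵀP` and the
right-hand side `Aᵀq + λ⁻²Pᵀd` tend to `AᵀA` and `Aᵀq`. Matrix inversion is continuous at the
invertible matrix `AᵀA` (the determinant is continuous and nonzero there), so `u_λ` tends to the
solution `(AᵀA)⁻¹Aᵀq = A⁻¹q` of the unpenalized normal equations. -/

open Filter Topology

theorem tendsto_add_smul_of_tendsto_zero {α R M : Type*} [Semiring R] [TopologicalSpace R]
    [AddCommMonoid M] [Module R M] [TopologicalSpace M] [ContinuousAdd M] [ContinuousSMul R M]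
    {l : Filter α} {c : α → R} (hc : Tendsto c l (𝓝 0)) (x y : M) :
    Tendsto (fun a => x + c a • y) l (𝓝 x) := by
  simpa using tendsto_const_nhds.add (hc.smul_const y)

namespace Matrix

section TopologicalField

variable {α n 𝕜 : Type*} [Fintype n] [DecidableEq n]
  [Field 𝕜] [TopologicalSpace 𝕜] [IsTopologicalDivisionRing 𝕜]
  {l : Filter α} {M : α → Matrix n n 𝕜} {M₀ : Matrix n n 𝕜}

theorem eventually_isUnit_of_tendsto [T1Space 𝕜] (hM : Tendsto M l (𝓝 M₀)) (h₀ : IsUnit M₀) :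
    ∀ᶠ a in l, IsUnit (M a) := by
  have hdet : Tendsto (fun a => (M a).det) l (𝓝 M₀.det) :=
    (continuous_id.matrix_det.tendsto M₀).comp hM
  have h₀ : M₀.det ≠ 0 := ((isUnit_iff_isUnit_det M₀).mp h₀).ne_zero
  filter_upwards [hdet.eventually_ne h₀] with a ha
  exact (isUnit_iff_isUnit_det _).mpr ha.isUnit

theorem tendsto_inv_mulVec_of_tendsto {v : α → n → 𝕜} {v₀ : n → 𝕜}
    (hM : Tendsto M l (𝓝 M₀)) (h₀ : IsUnit M₀) (hv : Tendsto v l (𝓝 v₀)) :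
    Tendsto (fun a => (M a)⁻¹ *ᵥ v a) l (𝓝 (M₀⁻¹ *ᵥ v₀)) := by
  have hdet : M₀.det ≠ 0 := ((isUnit_iff_isUnit_det M₀).mp h₀).ne_zero
  have hinv : Tendsto (fun a => (M a)⁻¹) l (𝓝 M₀⁻¹) :=
    (continuousAt_matrix_inv M₀ (by simpa using continuousAt_inv₀ hdet)).tendsto.comp hM
  exact ((continuous_fst.matrix_mulVec continuous_snd).tendsto _).comp (hinv.prodMk_nhds hv)

end TopologicalField

theorem inv_transpose_mul_self_mulVec_transpose_mulVec {n R : Type*} [Fintype n] [DecidableEq n]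
    [CommRing R] {A : Matrix n n R} (hA : IsUnit A) (q : n → R) :
    (Aᵀ * A)⁻¹ *ᵥ (Aᵀ *ᵥ q) = A⁻¹ *ᵥ q := by
  have hAt : IsUnit Aᵀ.det := (isUnit_iff_isUnit_det _).mp ((isUnit_transpose A).mpr hA)
  rw [mulVec_mulVec, mul_inv_rev, Matrix.mul_assoc, nonsing_inv_mul _ hAt, Matrix.mul_one]

end Matrix

/-- As the penalty parameter `λ` tends to infinity, the data-augmented wavefield solve
`u_λ = (AᵀA + λ⁻²PᵀP)⁻¹(Aᵀq + λ⁻²Pᵀd)` reduces to the exact PDE solve `A⁻¹q`; the matrix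
`AᵀA + λ⁻²PᵀP` is invertible for all sufficiently large `λ`. -/
theorem stmt_13 {n r : ℕ} (A : Matrix (Fin n) (Fin n) ℝ) (hA : IsUnit A)
    (P : Matrix (Fin r) (Fin n) ℝ) (q : Fin n → ℝ) (d : Fin r → ℝ) :
    (∀ᶠ lam : ℝ in Filter.atTop, IsUnit (Aᵀ * A + (lam ^ 2)⁻¹ • (Pᵀ * P))) ∧
    Filter.Tendsto
      (fun lam : ℝ =>
        (Aᵀ * A + (lam ^ 2)⁻¹ • (Pᵀ * P))⁻¹ *ᵥ (Aᵀ *ᵥ q + (lam ^ 2)⁻¹ • (Pᵀ *ᵥ d)))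
      Filter.atTop (nhds (A⁻¹ *ᵥ q)) := by
  have hweight : Tendsto (fun lam : ℝ => (lam ^ 2)⁻¹) atTop (𝓝 0) :=
    (tendsto_pow_atTop two_ne_zero).inv_tendsto_atTop
  have hnormal := tendsto_add_smul_of_tendsto_zero hweight (Aᵀ * A) (Pᵀ * P)
  have hrhs := tendsto_add_smul_of_tendsto_zero hweight (Aᵀ *ᵥ q) (Pᵀ *ᵥ d)
  have hunit : IsUnit (Aᵀ * A) := ((isUnit_transpose A).mpr hA).mul hA
  refine ⟨eventually_isUnit_of_tendsto hnormal hunit, ?_⟩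
  rw [← inv_transpose_mul_self_mulVec_transpose_mulVec hA]
  exact tendsto_inv_mulVec_of_tendsto hnormal hunit hrhs
end

section
/- Let n ≥ 1 and z ∈ ℝⁿ. Then there exists a threshold a ∈ ℝ with Σᵢ max(0, zᵢ − a) = 1, and the vector x with components xᵢ = max(0, zᵢ − a) is the unique minimizer of ‖x − z‖ over the unit simplex {x ∈ ℝⁿ : xᵢ ≥ 0 for all i, Σᵢ xᵢ = 1}; i.e. x is the Euclidean projection of z onto the unit simplex. -/
open scoped RealInnerProductSpace

/-!
`a ↦ Σᵢ max(0, zᵢ − a)` is continuous, vanishes at `a = maxᵢ zᵢ` and is at least `1`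
at `a = maxᵢ zᵢ − 1`, so the intermediate value theorem gives the threshold. For `x` the
soft-thresholded vector, `zᵢ − xᵢ − a` is `0` where `xᵢ > 0` and `≤ 0` where `xᵢ = 0`, so
`⟪y − x, x − z⟫ = −Σᵢ (yᵢ − xᵢ)(zᵢ − xᵢ − a) ≥ 0` for every `y` in the simplex. Hence
`‖y − z‖² = ‖y − x‖² + 2⟪y − x, x − z⟫ + ‖x − z‖² > ‖x − z‖²` whenever `y ≠ x`.
-/

theorem norm_sub_lt_norm_sub_of_inner_nonneg {E : Type*} [NormedAddCommGroup E]
    [InnerProductSpace ℝ E] {x y z : E} (hinner : 0 ≤ ⟪y - x, x - z⟫) (hne : y ≠ x) :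
    ‖x - z‖ < ‖y - z‖ := by
  have hyx : 0 < ‖y - x‖ := norm_pos_iff.mpr (sub_ne_zero.mpr hne)
  have hsq : ‖y - z‖ ^ 2 = ‖y - x‖ ^ 2 + 2 * ⟪y - x, x - z⟫ + ‖x - z‖ ^ 2 := by
    rw [← norm_add_sq_real, sub_add_sub_cancel]
  exact lt_of_pow_lt_pow_left₀ 2 (norm_nonneg _) (by nlinarith)

theorem exists_sum_max_zero_sub_eq {ι : Type*} [Fintype ι] [Nonempty ι] (z : ι → ℝ) {c : ℝ}
    (hc : 0 ≤ c) : ∃ a, ∑ i, max 0 (z i - a) = c := by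
  obtain ⟨j, -, hj⟩ := Finset.univ.exists_max_image z Finset.univ_nonempty
  have hcont : Continuous fun a => ∑ i, max 0 (z i - a) := by fun_prop
  have hzero : ∑ i, max 0 (z i - z j) = 0 :=
    Finset.sum_eq_zero fun i hi => max_eq_left (sub_nonpos.mpr (hj i hi))
  have hge : c ≤ ∑ i, max 0 (z i - (z j - c)) :=
    calc c = max 0 (z j - (z j - c)) := by rw [sub_sub_cancel, max_eq_right hc]
      _ ≤ ∑ i, max 0 (z i - (z j - c)) :=
        Finset.single_le_sum (f := fun i => max 0 (z i - (z j - c)))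
          (fun i _ => le_max_left _ _) (Finset.mem_univ j)
  obtain ⟨a, -, ha⟩ := intermediate_value_Icc' (by linarith) hcont.continuousOn
    ⟨hzero.le.trans hc, hge⟩
  exact ⟨a, ha⟩

theorem mul_sub_max_zero_sub_sub_nonpos {y : ℝ} (hy : 0 ≤ y) (t a : ℝ) :
    (y - max 0 (t - a)) * (t - max 0 (t - a) - a) ≤ 0 := by
  rcases le_total t a with h | h
  · rw [max_eq_left (sub_nonpos.mpr h)]
    nlinarith
  · rw [max_eq_right (sub_nonneg.mpr h)]
    simp

theorem inner_sub_toLp_max_zero_sub_nonneg {ι : Type*} [Fintype ι] (z y : EuclideanSpace ℝ ι)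
    (a : ℝ) (hy : ∀ i, 0 ≤ y i) (hsum : ∑ i, y i = ∑ i, max 0 (z i - a)) :
    0 ≤ ⟪y - WithLp.toLp 2 (fun i => max 0 (z i - a)), WithLp.toLp 2 (fun i => max 0 (z i - a)) - z⟫ := by
  set x : EuclideanSpace ℝ ι := WithLp.toLp 2 fun i => max 0 (z i - a)
  have hdiff : ∑ i, (y i - x i) = 0 := by
    rw [Finset.sum_sub_distrib, hsum, sub_self]
  calc 0 ≤ ∑ i, -((y i - x i) * (z i - x i - a)) :=
        Finset.sum_nonneg fun i _ => neg_nonneg.mpr (mul_sub_max_zero_sub_sub_nonpos (hy i) _ _)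
    _ = ∑ i, -((y i - x i) * (z i - x i - a)) - a * ∑ i, (y i - x i) := by
        rw [hdiff, mul_zero, sub_zero]
    _ = ⟪y - x, x - z⟫ := by
        rw [Finset.mul_sum, ← Finset.sum_sub_distrib]
        simp only [PiLp.inner_apply, PiLp.sub_apply, RCLike.inner_apply, conj_trivial]
        exact Finset.sum_congr rfl fun i _ => by ring

/-- Soft-thresholding characterization of the Euclidean projection onto the unit simplex:
there is a threshold `a` with `Σᵢ max(0, zᵢ − a) = 1`, and `xᵢ = max(0, zᵢ − a)` is the
unique closest point of the simplex to `z`. -/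
theorem stmt_16 {n : ℕ} (hn : 1 ≤ n) (z : EuclideanSpace ℝ (Fin n)) :
    ∃ a : ℝ, (∑ i, max 0 (z i - a)) = 1 ∧
      ∀ y : EuclideanSpace ℝ (Fin n), (∀ i, 0 ≤ y i) → (∑ i, y i) = 1 →
        y ≠ (show EuclideanSpace ℝ (Fin n) from WithLp.toLp 2 fun i => max 0 (z i - a)) →
        ‖(show EuclideanSpace ℝ (Fin n) from WithLp.toLp 2 fun i => max 0 (z i - a)) - z‖ < ‖y - z‖ := by
  have : Nonempty (Fin n) := ⟨⟨0, hn⟩⟩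
  obtain ⟨a, ha⟩ := exists_sum_max_zero_sub_eq z zero_le_one
  refine ⟨a, ha, fun y hy hsum hne => norm_sub_lt_norm_sub_of_inner_nonneg ?_ hne⟩
  exact inner_sub_toLp_max_zero_sub_nonneg z y a hy (hsum.trans ha.symm)
end

section
/- Let n ≥ 1, c > 0, and z ∈ ℝⁿ with Σᵢ max(0, zᵢ) > c. Then there exists a threshold a > 0 with Σᵢ max(0, zᵢ − a) = c, and the vector x* with components x*ᵢ = zᵢ if zᵢ ≤ 0 and x*ᵢ = max(0, zᵢ − a) if zᵢ > 0 is the unique minimizer of ‖x − z‖ over the set C = {x ∈ ℝⁿ : Σᵢ max(0, xᵢ) ≤ c}; i.e. the projection onto the one-sided ℓ₁ ball is computed by soft-thresholding the positive part of z while leaving nonpositive components unchanged. -/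
/-!
Shrinking the positive coordinates of `z` by `a` and keeping the others gives a point `x` with
`∑ max 0 (xᵢ) = ∑ max 0 (zᵢ - a)`, which equals `c` for the right `a > 0` by the intermediate
value theorem. Moreover `z - x` is `a` times a subgradient of `h = ∑ max 0 (·)` at `x`, so for every
`y` with `h y ≤ c = h x` we get `⟪y - x, z - x⟫ ≤ a (h y - h x) ≤ 0`, the obtuse-angle criterion
that makes `x` the unique closest point of `{h ≤ c}` to `z`.
-/

open Finset

noncomputable def posSoftThreshold (a t : ℝ) : ℝ :=
  if t ≤ 0 then t else max 0 (t - a)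

lemma max_zero_posSoftThreshold {a : ℝ} (ha : 0 ≤ a) (t : ℝ) :
    max 0 (posSoftThreshold a t) = max 0 (t - a) := by
  unfold posSoftThreshold
  split_ifs with ht
  · rw [max_eq_left ht, max_eq_left (by linarith)]
  · exact max_eq_right (le_max_left _ _)

lemma posSoftThreshold_variational {a : ℝ} (ha : 0 ≤ a) (t y : ℝ) :
    (y - posSoftThreshold a t) * (t - posSoftThreshold a t) ≤ a * (max 0 y - max 0 (t - a)) := by
  have hy : y ≤ max 0 y := le_max_right _ _
  have hy0 : 0 ≤ max 0 y := le_max_left _ _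
  unfold posSoftThreshold
  split_ifs with ht
  · rw [max_eq_left (by linarith : t - a ≤ 0)]
    nlinarith
  · rcases le_or_gt t a with hta | hta
    · rw [max_eq_left (by linarith : t - a ≤ 0)]
      nlinarith
    · rw [max_eq_right (by linarith : 0 ≤ t - a)]
      nlinarith

lemma exists_pos_sum_max_zero_sub_eq {ι : Type*} [Fintype ι] (z : ι → ℝ) {c : ℝ} (hc : 0 ≤ c)
    (hz : c < ∑ i, max 0 (z i)) : ∃ a, 0 < a ∧ ∑ i, max 0 (z i - a) = c := by
  set S := ∑ i, max 0 (z i)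
  set f : ℝ → ℝ := fun a => ∑ i, max 0 (z i - a)
  have hf : Continuous f := by fun_prop
  have hf0 : f 0 = S := by simp only [f, S, sub_zero]
  have hfS : f S = 0 := sum_eq_zero fun i _ => max_eq_left <| sub_nonpos.mpr <|
    (le_max_right 0 (z i)).trans (single_le_sum (fun j _ => le_max_left 0 (z j)) (mem_univ i))
  obtain ⟨a, ha, hfa⟩ := intermediate_value_Icc' (hc.trans hz.le) hf.continuousOn
    (by rw [hf0, hfS]; exact ⟨hc, hz.le⟩ : c ∈ Set.Icc (f S) (f 0))
  refine ⟨a, lt_of_le_of_ne ha.1 ?_, hfa⟩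
  rintro rfl
  exact hz.ne' (hf0 ▸ hfa)

lemma norm_sub_lt_norm_sub_of_inner_nonpos {E : Type*} [NormedAddCommGroup E]
    [InnerProductSpace ℝ E] {x y z : E} (h : inner ℝ (y - x) (z - x) ≤ 0) (hne : y ≠ x) :
    ‖x - z‖ < ‖y - z‖ := by
  have hyx : 0 < ‖y - x‖ := norm_sub_pos_iff.mpr hne
  have hsq : ‖y - z‖ ^ 2 = ‖y - x‖ ^ 2 - 2 * inner ℝ (y - x) (z - x) + ‖z - x‖ ^ 2 := by
    rw [← norm_sub_sq_real, sub_sub_sub_cancel_right]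
  rw [norm_sub_rev x z]
  exact lt_of_pow_lt_pow_left₀ 2 (norm_nonneg _) (by nlinarith)

theorem stmt_17_general {n : ℕ} (c : ℝ) (hc : 0 < c)
    (z : EuclideanSpace ℝ (Fin n)) (hz : c < ∑ i, max 0 (z i)) :
    ∃ a : ℝ, 0 < a ∧ (∑ i, max 0 (z i - a)) = c ∧
      (∑ i, max 0 ((show EuclideanSpace ℝ (Fin n) from
          WithLp.toLp 2 fun i => if z i ≤ 0 then z i else max 0 (z i - a)) i)) ≤ c ∧
      ∀ y : EuclideanSpace ℝ (Fin n), (∑ i, max 0 (y i)) ≤ c →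
        y ≠ (show EuclideanSpace ℝ (Fin n) from
          WithLp.toLp 2 fun i => if z i ≤ 0 then z i else max 0 (z i - a)) →
        ‖(show EuclideanSpace ℝ (Fin n) from
          WithLp.toLp 2 fun i => if z i ≤ 0 then z i else max 0 (z i - a)) - z‖ < ‖y - z‖ := by
  obtain ⟨a, ha, hsum⟩ := exists_pos_sum_max_zero_sub_eq z hc.le hz
  let x : EuclideanSpace ℝ (Fin n) := WithLp.toLp 2 fun i => posSoftThreshold a (z i)
  have hx : ∑ i, max 0 (x i) = c := by
    simpa only [x, PiLp.toLp_apply, max_zero_posSoftThreshold ha.le] using hsum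
  refine ⟨a, ha, hsum, hx.le, fun y hy hne => norm_sub_lt_norm_sub_of_inner_nonpos (x := x) ?_ hne⟩
  calc inner ℝ (y - x) (z - x) = ∑ i, (y i - x i) * (z i - x i) := by
        simp [PiLp.inner_apply, mul_comm]
    _ ≤ ∑ i, a * (max 0 (y i) - max 0 (z i - a)) :=
        sum_le_sum fun i _ => posSoftThreshold_variational ha.le (z i) (y i)
    _ = a * (∑ i, max 0 (y i) - c) := by rw [← mul_sum, sum_sub_distrib, hsum]
    _ ≤ 0 := mul_nonpos_of_nonneg_of_nonpos ha.le (by linarith)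

/-- Projection onto the asymmetric (one-sided) ℓ₁ ball `C = {x : Σᵢ max(0, xᵢ) ≤ c}` when
`Σᵢ max(0, zᵢ) > c`: there is a threshold `a > 0` with `Σᵢ max(0, zᵢ − a) = c`, and the
vector obtained by soft-thresholding the positive components of `z` (leaving nonpositive
components unchanged) is the unique closest point of `C` to `z`. -/
theorem stmt_17 {n : ℕ} (hn : 1 ≤ n) (c : ℝ) (hc : 0 < c)
    (z : EuclideanSpace ℝ (Fin n)) (hz : c < ∑ i, max 0 (z i)) :
    ∃ a : ℝ, 0 < a ∧ (∑ i, max 0 (z i - a)) = c ∧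
      (∑ i, max 0 ((show EuclideanSpace ℝ (Fin n) from
          WithLp.toLp 2 fun i => if z i ≤ 0 then z i else max 0 (z i - a)) i)) ≤ c ∧
      ∀ y : EuclideanSpace ℝ (Fin n), (∑ i, max 0 (y i)) ≤ c →
        y ≠ (show EuclideanSpace ℝ (Fin n) from
          WithLp.toLp 2 fun i => if z i ≤ 0 then z i else max 0 (z i - a)) →
        ‖(show EuclideanSpace ℝ (Fin n) from
          WithLp.toLp 2 fun i => if z i ≤ 0 then z i else max 0 (z i - a)) - z‖ < ‖y - z‖ :=
  stmt_17_general c hc z hz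
end

section
/- Let A : ℝ → Matrix (Fin n) (Fin n) ℝ be differentiable at m₀ with A(m₀) invertible, let P be an r×n real matrix, q ∈ ℝⁿ, d ∈ ℝʳ, and define f(m) = (1/2)‖P·A(m)⁻¹·q − d‖² (for m near m₀, where A(m) is invertible). Set u = A(m₀)⁻¹q and v = (A(m₀)ᵀ)⁻¹Pᵀ(Pu − d). Then f is differentiable at m₀ with derivative f′(m₀) = −⟨v, A′(m₀)·u⟩, where A′(m₀) is the derivative of A at m₀ (an n×n matrix) acting on u by matrix-vector multiplication. -/
open Matrix
open scoped RealInnerProductSpace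

/-!
Differentiating `A(m) A(m)⁻¹ = 1` gives `(A⁻¹)' = -A⁻¹ A' A⁻¹`, so the forward wavefield
`A(m)⁻¹ q` has derivative `-A⁻¹ A' u` at `m₀`, and the chain rule for `½‖·‖²` gives
`f'(m₀) = -⟪P u - d, P A⁻¹ A' u⟫`. Moving `P` and `A⁻¹` to the other side of the inner product
as their transposes turns the left factor into the adjoint wavefield `v`.
-/

theorem Matrix.hasDerivAt_of_hasDerivAt_apply {𝕜 ι κ : Type*} [RCLike 𝕜] [Fintype ι]
    {A : 𝕜 → Matrix κ ι 𝕜} {A' : Matrix κ ι 𝕜} {t : 𝕜}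
    (hA : ∀ i j, HasDerivAt (fun s => A s i j) (A' i j) t) : HasDerivAt A A' t := by
  have h : HasDerivAt (F := κ → ι → 𝕜) A A' t :=
    hasDerivAt_pi.2 fun i => hasDerivAt_pi.2 (hA i)
  exact h

section Frobenius

/- Any matrix norm would do: `HasDerivAt` for matrix-valued functions only sees the product
topology, which the Frobenius norm induces. -/
attribute [local instance] Matrix.frobeniusNormedAddCommGroup Matrix.frobeniusNormedSpace
  Matrix.frobeniusNormedRing Matrix.frobeniusNormedAlgebra

variable {𝕜 ι κ : Type*} [RCLike 𝕜] [Fintype ι] [DecidableEq ι] {t : 𝕜}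

theorem HasDerivAt.matrix_inv {A : 𝕜 → Matrix ι ι 𝕜} {A' : Matrix ι ι 𝕜}
    (hA : HasDerivAt A A' t) (hinv : IsUnit (A t)) :
    HasDerivAt (fun s => (A s)⁻¹) (-((A t)⁻¹ * A' * (A t)⁻¹)) t := by
  obtain ⟨u, hu⟩ := hinv
  have h := (hu ▸ hasFDerivAt_ringInverse (𝕜 := 𝕜) u).comp_hasDerivAt t hA
  have hu_inv : (↑u⁻¹ : Matrix ι ι 𝕜) = (A t)⁻¹ := by
    rw [nonsing_inv_eq_ringInverse, ← hu, Ring.inverse_unit]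
  simp only [Function.comp_def, ← nonsing_inv_eq_ringInverse, hu_inv] at h
  exact h

theorem HasDerivAt.toEuclideanLin_apply [Fintype κ] {B : 𝕜 → Matrix κ ι 𝕜}
    {B' : Matrix κ ι 𝕜} (hB : HasDerivAt B B' t) (x : EuclideanSpace 𝕜 ι) :
    HasDerivAt (fun s => toEuclideanLin (B s) x) (toEuclideanLin B' x) t := by
  have h := (LinearMap.applyₗ x ∘ₗ toEuclideanLin.toLinearMap).toContinuousLinearMap.hasFDerivAt
    |>.comp_hasDerivAt t hB
  exact h

end Frobenius

theorem Matrix.inner_toEuclideanLin_right {𝕜 ι κ : Type*} [RCLike 𝕜] [Fintype ι] [Fintype κ]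
    [DecidableEq ι] [DecidableEq κ] (M : Matrix κ ι 𝕜) (x : EuclideanSpace 𝕜 κ)
    (y : EuclideanSpace 𝕜 ι) :
    inner 𝕜 x (toEuclideanLin M y) = inner 𝕜 (toEuclideanLin Mᴴ x) y := by
  rw [toEuclideanLin_conjTranspose_eq_adjoint, LinearMap.adjoint_inner_left]

/-- Adjoint-state gradient formula for the reduced FWI objective with a single source and a
scalar model parameter: if `A` is differentiable at `m₀` (entrywise, with derivative matrix
`A'`) and `A m₀` is invertible, then `f(m) = (1/2)‖P A(m)⁻¹ q − d‖²` is differentiable at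
`m₀` with derivative `−⟨v, A' u⟩`, where `u = A(m₀)⁻¹ q` is the forward wavefield and
`v = A(m₀)⁻ᵀ Pᵀ (P u − d)` is the adjoint wavefield. -/
theorem stmt_18 {n r : ℕ} (A : ℝ → Matrix (Fin n) (Fin n) ℝ)
    (A' : Matrix (Fin n) (Fin n) ℝ) (m₀ : ℝ)
    (hA : ∀ i j, HasDerivAt (fun m => A m i j) (A' i j) m₀)
    (hinv : IsUnit (A m₀))
    (P : Matrix (Fin r) (Fin n) ℝ)
    (q : EuclideanSpace ℝ (Fin n)) (d : EuclideanSpace ℝ (Fin r))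
    (u v : EuclideanSpace ℝ (Fin n))
    (hu : u = Matrix.toEuclideanLin (A m₀)⁻¹ q)
    (hv : v = Matrix.toEuclideanLin ((A m₀)ᵀ)⁻¹
      (Matrix.toEuclideanLin Pᵀ (Matrix.toEuclideanLin P u - d))) :
    HasDerivAt
      (fun m : ℝ =>
        (1 / 2) * ‖Matrix.toEuclideanLin P (Matrix.toEuclideanLin (A m)⁻¹ q) - d‖ ^ 2)
      (-⟪v, Matrix.toEuclideanLin A' u⟫) m₀ := by
  have hforward :=
    ((hasDerivAt_of_hasDerivAt_apply hA).matrix_inv hinv).toEuclideanLin_apply q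
  have hresidual := ((toEuclideanLin P).toContinuousLinearMap.hasFDerivAt.comp_hasDerivAt m₀
    hforward).sub_const d
  refine (hresidual.norm_sq.const_mul (1 / 2)).congr_deriv ?_
  rw [hv, ← transpose_nonsing_inv, ← conjTranspose_eq_transpose_of_trivial,
    ← conjTranspose_eq_transpose_of_trivial, ← inner_toEuclideanLin_right,
    ← inner_toEuclideanLin_right]
  simp [← hu]
end
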